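/- arXiv:2604.18450 — 4 statements merged into one kernel-verified Lean document; each statement's English description precedes it below -/
import Mathlib

section
/- If X·Xᵀ is positive definite, then the gradient-flow trajectory converges to the least-squares estimator: A_t → Y·Xᵀ·(X·Xᵀ)⁻¹ in Frobenius norm as t → +∞. -/
open Matrix NormedSpace Filter

attribute [local instance] Matrix.frobeniusSeminormedAddCommGroup
  Matrix.frobeniusNormedAddCommGroup Matrix.frobeniusIsBoundedSMul Matrix.frobeniusNormedSpace

/-!
Writing `S = X·Xᵀ = U·diag(μ)·Uᴴ` with `U` unitary and all `μᵢ > 0`, the matrix exponential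
`exp(−t·S) = U·diag(e^{−tμᵢ})·Uᴴ` tends to `0`. The trajectory satisfies
`A_t − Y·Xᵀ·(X·Xᵀ)⁻¹ = (A_init − Y·Xᵀ·(X·Xᵀ)⁻¹)·exp(−t·S)`, so it converges to the estimator.
-/

namespace Matrix

open scoped Topology ComplexOrder

variable {𝕜 n : Type*} [RCLike 𝕜] [Fintype n] [DecidableEq n]

theorem IsHermitian.exp_real_smul {S : Matrix n n 𝕜} (hS : S.IsHermitian) (t : ℝ) :
    NormedSpace.exp (t • S) = (hS.eigenvectorUnitary : Matrix n n 𝕜) *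
      diagonal (fun i => (Real.exp (t * hS.eigenvalues i) : 𝕜)) *
        star (hS.eigenvectorUnitary : Matrix n n 𝕜) := by
  set u := hS.eigenvectorUnitary
  have hdiag : t • diagonal (RCLike.ofReal ∘ hS.eigenvalues) =
      diagonal (fun i => ((t * hS.eigenvalues i : ℝ) : 𝕜)) := by
    rw [← diagonal_smul]; congr 1; ext i; simp [RCLike.real_smul_eq_coe_mul]
  conv_lhs => rw [hS.spectral_theorem, Unitary.conjStarAlgAut_apply, ← smul_mul_assoc,
    ← mul_smul_comm, hdiag]
  rw [show star (u : Matrix n n 𝕜) = ↑(Unitary.toUnits u)⁻¹ from rfl,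
    show (u : Matrix n n 𝕜) = ↑(Unitary.toUnits u) from rfl, Matrix.exp_units_conj,
    exp_diagonal, Pi.exp_def]
  congr 3
  ext i
  rw [Real.exp_eq_exp_ℝ, ← RCLike.algebraMap_eq_ofReal, algebraMap_exp_comm]

theorem PosDef.tendsto_exp_neg_smul_atTop {S : Matrix n n 𝕜} (hS : S.PosDef) :
    Tendsto (fun t : ℝ => NormedSpace.exp ((-t) • S)) atTop (𝓝 0) := by
  set U := (hS.1.eigenvectorUnitary : Matrix n n 𝕜)
  have hdecay (i : n) :
      Tendsto (fun t : ℝ => (Real.exp (-t * hS.1.eigenvalues i) : 𝕜)) atTop (𝓝 0) := by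
    simpa [Function.comp_def] using ((RCLike.continuous_ofReal (K := 𝕜)).tendsto 0).comp <|
      Real.tendsto_exp_atBot.comp <|
        (tendsto_neg_atTop_atBot (G := ℝ)).atBot_mul_const (hS.eigenvalues_pos i)
  have hdiag : Tendsto (fun t : ℝ => diagonal fun i => (Real.exp (-t * hS.1.eigenvalues i) : 𝕜))
      atTop (𝓝 0) := by
    simpa [Function.comp_def] using
      (continuous_id.matrix_diagonal.tendsto _).comp (tendsto_pi_nhds.2 hdecay)
  have hconj : Continuous fun D : Matrix n n 𝕜 => U * D * star U := by fun_prop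
  have hlim := (hconj.tendsto 0).comp hdiag
  rw [mul_zero, zero_mul] at hlim
  exact hlim.congr fun t => (hS.1.exp_real_smul (-t)).symm

end Matrix

theorem stmt3_general (N M : ℕ)
    (X Y : Matrix (Fin N) (Fin M) ℝ)
    (hX : (X * Xᵀ).PosDef)
    (A_init : Matrix (Fin N) (Fin N) ℝ)
    (A : ℝ → Matrix (Fin N) (Fin N) ℝ)
    (hA : ∀ t : ℝ, A t =
      A_init * exp ((-t) • (X * Xᵀ)) +
        Y * Xᵀ * (X * Xᵀ)⁻¹ * (1 - exp ((-t) • (X * Xᵀ)))) :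
    Tendsto (fun t : ℝ => ‖A t - Y * Xᵀ * (X * Xᵀ)⁻¹‖) atTop (nhds 0) := by
  set L := Y * Xᵀ * (X * Xᵀ)⁻¹
  have hdeviation (t : ℝ) : A t - L = (A_init - L) * exp ((-t) • (X * Xᵀ)) := by
    rw [hA t]; noncomm_ring
  simpa [hdeviation] using (tendsto_const_nhds.mul hX.tendsto_exp_neg_smul_atTop).norm

/-- If `X·Xᵀ` is positive definite, then the gradient-flow trajectory
`A_t = A_init·exp(−t·X·Xᵀ) + Y·Xᵀ·(X·Xᵀ)⁻¹·(I − exp(−t·X·Xᵀ))` converges to the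
least-squares estimator `Y·Xᵀ·(X·Xᵀ)⁻¹` in Frobenius norm as `t → +∞`. -/
theorem stmt3 (N M : ℕ) (hN : 0 < N) (hM : 0 < M)
    (X Y : Matrix (Fin N) (Fin M) ℝ)
    (hX : (X * Xᵀ).PosDef)
    (A_init : Matrix (Fin N) (Fin N) ℝ)
    (A : ℝ → Matrix (Fin N) (Fin N) ℝ)
    (hA : ∀ t : ℝ, A t =
      A_init * exp ((-t) • (X * Xᵀ)) +
        Y * Xᵀ * (X * Xᵀ)⁻¹ * (1 - exp ((-t) • (X * Xᵀ)))) :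
    Tendsto (fun t : ℝ => ‖A t - Y * Xᵀ * (X * Xᵀ)⁻¹‖) atTop (nhds 0) :=
  stmt3_general N M X Y hX A_init A hA
end

section
/- Assume X admits the compact singular value decomposition X = U·Λ·Vᵀ, where U ∈ ℝ^{N×N} is orthogonal, Λ ∈ ℝ^{N×N} is diagonal and invertible, and V ∈ ℝ^{M×N} satisfies Vᵀ·V = I_N. Then with targets Y = θ·v·vᵀ·X + Z, the gradient-flow trajectory satisfies Uᵀ·A_t·U = (Uᵀ·A_init·U)·exp(−t·Λ²) + (Uᵀ·Z·V)·Λ⁻¹·(I − exp(−t·Λ²)) + θ·(Uᵀ·v)·(Uᵀ·v)ᵀ·(I − exp(−t·Λ²)). -/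
/-!
Conjugation by the orthogonal `U` diagonalises the Gram matrix, `X * Xᵀ = U * Λ² * Uᵀ`, so
`exp (-t • X * Xᵀ) = U * exp (-t • Λ²) * Uᵀ`, and `Xᵀ * (X * Xᵀ)⁻¹ = V * Λ⁻¹ * Uᵀ` is a right
inverse of `X`. Hence the limit coefficient `Y * Xᵀ * (X * Xᵀ)⁻¹` recovers the signal `θ • v vᵀ`
exactly and maps the noise to `Z * V * Λ⁻¹ * Uᵀ`.
-/

open Matrix NormedSpace

namespace Matrix

section Orthogonal

variable {m : Type*} [Fintype m] [DecidableEq m]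

lemma transpose_mul_mul_conj_mul {α : Type*} [CommRing α] {U : Matrix m m α} (hU : Uᵀ * U = 1)
    (B C : Matrix m m α) : Uᵀ * (B * (U * C * Uᵀ)) * U = Uᵀ * B * U * C := by
  simp only [Matrix.mul_assoc, hU, Matrix.mul_one]

lemma exp_conj_of_transpose_mul_self {𝔸 : Type*} [NormedCommRing 𝔸] [NormedAlgebra ℚ 𝔸]
    [CompleteSpace 𝔸] {U : Matrix m m 𝔸} (hU : Uᵀ * U = 1) (A : Matrix m m 𝔸) :
    exp (U * A * Uᵀ) = U * exp A * Uᵀ := by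
  have hUinv : U⁻¹ = Uᵀ := inv_eq_left_inv hU
  have hUunit : IsUnit U := IsUnit.of_mul_eq_one_right Uᵀ hU
  rw [← hUinv, exp_conj U A hUunit]

end Orthogonal

section SingularValueDecomposition

variable {m k α : Type*} [Fintype m] [Fintype k] [DecidableEq m] [CommRing α]
  {X : Matrix m k α} {U Λ : Matrix m m α} {V : Matrix k m α}

lemma svd_mul_transpose (hV : Vᵀ * V = 1) (hX : X = U * Λ * Vᵀ) :
    X * Xᵀ = U * (Λ * Λᵀ) * Uᵀ := by
  simp only [hX, transpose_mul, transpose_transpose, Matrix.mul_assoc]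
  rw [← Matrix.mul_assoc Vᵀ V, hV, Matrix.one_mul]

lemma svd_mul_pinv (hU : Uᵀ * U = 1) (hV : Vᵀ * V = 1) (hΛ : IsUnit Λ)
    (hX : X = U * Λ * Vᵀ) : X * (V * Λ⁻¹ * Uᵀ) = 1 := by
  have hUU : U * Uᵀ = 1 := mul_eq_one_comm.mp hU
  simp only [hX, Matrix.mul_assoc]
  rw [← Matrix.mul_assoc Vᵀ V, hV, Matrix.one_mul,
    mul_nonsing_inv_cancel_left _ _ ((isUnit_iff_isUnit_det _).mp hΛ), hUU]

lemma svd_transpose_mul_inv (hU : Uᵀ * U = 1) (hV : Vᵀ * V = 1) (hΛ : IsUnit Λ)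
    (hX : X = U * Λ * Vᵀ) : Xᵀ * (X * Xᵀ)⁻¹ = V * Λ⁻¹ * Uᵀ := by
  have hUU : U * Uᵀ = 1 := mul_eq_one_comm.mp hU
  have hΛt : Λᵀ * Λᵀ⁻¹ = 1 :=
    mul_nonsing_inv _ (by rw [det_transpose]; exact (isUnit_iff_isUnit_det _).mp hΛ)
  rw [svd_mul_transpose hV hX, Matrix.mul_inv_rev, Matrix.mul_inv_rev, Matrix.mul_inv_rev,
    inv_eq_left_inv hU, inv_eq_left_inv hUU]
  simp only [hX, transpose_mul, transpose_transpose, Matrix.mul_assoc]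
  rw [← Matrix.mul_assoc Uᵀ U, hU, Matrix.one_mul, ← Matrix.mul_assoc Λᵀ, hΛt, Matrix.one_mul]

end SingularValueDecomposition

lemma transpose_mul_vecMulVec_mul {m n α : Type*} [Fintype m] [CommSemiring α]
    (U : Matrix m n α) (v w : m → α) :
    Uᵀ * vecMulVec v w * U = vecMulVec (Uᵀ *ᵥ v) (Uᵀ *ᵥ w) := by
  simp only [mul_vecMulVec, vecMulVec_mul, mulVec_transpose]

end Matrix

theorem stmt6_general (N M : ℕ)
    (X Z : Matrix (Fin N) (Fin M) ℝ)
    (U : Matrix (Fin N) (Fin N) ℝ) (hU : Uᵀ * U = 1)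
    (Λ : Matrix (Fin N) (Fin N) ℝ) (hΛdiag : Λ.IsDiag) (hΛunit : IsUnit Λ)
    (V : Matrix (Fin M) (Fin N) ℝ) (hV : Vᵀ * V = 1)
    (hX : X = U * Λ * Vᵀ)
    (v : Fin N → ℝ) (θ : ℝ)
    (Y : Matrix (Fin N) (Fin M) ℝ)
    (hY : Y = θ • (vecMulVec v v * X) + Z)
    (A_init : Matrix (Fin N) (Fin N) ℝ)
    (A : ℝ → Matrix (Fin N) (Fin N) ℝ)
    (hA : ∀ t : ℝ, A t =
      A_init * exp ((-t) • (X * Xᵀ)) +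
        Y * Xᵀ * (X * Xᵀ)⁻¹ * (1 - exp ((-t) • (X * Xᵀ)))) :
    ∀ t : ℝ, Uᵀ * A t * U =
      (Uᵀ * A_init * U) * exp ((-t) • (Λ * Λ)) +
        (Uᵀ * Z * V) * Λ⁻¹ * (1 - exp ((-t) • (Λ * Λ))) +
        θ • (vecMulVec (Uᵀ *ᵥ v) (Uᵀ *ᵥ v) * (1 - exp ((-t) • (Λ * Λ)))) := by
  intro t
  have hUU : U * Uᵀ = 1 := mul_eq_one_comm.mp hU
  set E := exp ((-t) • (Λ * Λ))
  have hexp : exp ((-t) • (X * Xᵀ)) = U * E * Uᵀ := by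
    rw [svd_mul_transpose hV hX, hΛdiag.isSymm.eq, ← Matrix.smul_mul, ← Matrix.mul_smul,
      exp_conj_of_transpose_mul_self hU]
  have hone : 1 - U * E * Uᵀ = U * (1 - E) * Uᵀ := by
    rw [Matrix.mul_sub, Matrix.sub_mul, Matrix.mul_one, hUU]
  have hcoef : Y * Xᵀ * (X * Xᵀ)⁻¹ = θ • vecMulVec v v + Z * V * Λ⁻¹ * Uᵀ := by
    rw [Matrix.mul_assoc, svd_transpose_mul_inv hU hV hΛunit hX, hY, Matrix.add_mul,
      Matrix.smul_mul, Matrix.mul_assoc _ X, svd_mul_pinv hU hV hΛunit hX]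
    simp only [Matrix.mul_one, Matrix.mul_assoc]
  have hcoef_rotated : Uᵀ * (Y * Xᵀ * (X * Xᵀ)⁻¹) * U =
      Uᵀ * Z * V * Λ⁻¹ + θ • vecMulVec (Uᵀ *ᵥ v) (Uᵀ *ᵥ v) := by
    rw [hcoef, Matrix.mul_add, Matrix.add_mul, Matrix.mul_smul, Matrix.smul_mul,
      ← Matrix.mul_assoc, transpose_mul_vecMulVec_mul, add_comm]
    simp only [Matrix.mul_assoc, hU, Matrix.mul_one]
  rw [hA t, hexp, hone, Matrix.mul_add, Matrix.add_mul, transpose_mul_mul_conj_mul hU,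
    transpose_mul_mul_conj_mul hU, hcoef_rotated, Matrix.add_mul, Matrix.smul_mul, add_assoc]

/-- If `X = U·Λ·Vᵀ` with `U` orthogonal, `Λ` diagonal and invertible,
and `Vᵀ·V = I_N`, then with targets `Y = θ·v·vᵀ·X + Z` the gradient-flow trajectory
satisfies `Uᵀ·A_t·U = (Uᵀ·A_init·U)·exp(−t·Λ²) + (Uᵀ·Z·V)·Λ⁻¹·(I − exp(−t·Λ²))
+ θ·(Uᵀ·v)·(Uᵀ·v)ᵀ·(I − exp(−t·Λ²))`. -/
theorem stmt6 (N M : ℕ) (hN : 0 < N) (hM : 0 < M)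
    (X Z : Matrix (Fin N) (Fin M) ℝ)
    (U : Matrix (Fin N) (Fin N) ℝ) (hU : Uᵀ * U = 1)
    (Λ : Matrix (Fin N) (Fin N) ℝ) (hΛdiag : Λ.IsDiag) (hΛunit : IsUnit Λ)
    (V : Matrix (Fin M) (Fin N) ℝ) (hV : Vᵀ * V = 1)
    (hX : X = U * Λ * Vᵀ)
    (v : Fin N → ℝ) (θ : ℝ)
    (Y : Matrix (Fin N) (Fin M) ℝ)
    (hY : Y = θ • (vecMulVec v v * X) + Z)
    (A_init : Matrix (Fin N) (Fin N) ℝ)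
    (A : ℝ → Matrix (Fin N) (Fin N) ℝ)
    (hA : ∀ t : ℝ, A t =
      A_init * exp ((-t) • (X * Xᵀ)) +
        Y * Xᵀ * (X * Xᵀ)⁻¹ * (1 - exp ((-t) • (X * Xᵀ)))) :
    ∀ t : ℝ, Uᵀ * A t * U =
      (Uᵀ * A_init * U) * exp ((-t) • (Λ * Λ)) +
        (Uᵀ * Z * V) * Λ⁻¹ * (1 - exp ((-t) • (Λ * Λ))) +
        θ • (vecMulVec (Uᵀ *ᵥ v) (Uᵀ *ᵥ v) * (1 - exp ((-t) • (Λ * Λ)))) :=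
  stmt6_general N M X Z U hU Λ hΛdiag hΛunit V hV hX v θ Y hY A_init A hA
end

section
/- Let σ > 0 be real and z ∈ ℂ with Im z > 0. Then there exists exactly one m ∈ ℂ with Im m < 0 satisfying m·(z + σ·m) = −1 (the scalar self-consistent Dyson equation of the semicircle law, 1/m = −z − σ·m). -/
open Complex

/-!
The Dyson equation is the quadratic `σ m² + z m + 1 = 0`. Its two roots sum to `-z / σ`, whose
imaginary part is negative, so at least one root lies in the lower half-plane. Two distinct roots
`m, m'` satisfy `(σ m) m' = 1`, so `m' = (σ m)⁻¹` and the imaginary parts of `m` and `m'` have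
opposite signs: at most one root lies in the lower half-plane.
-/

section Quadratic

variable {R : Type*} [CommRing R] {a b c x y : R}

theorem quadratic_eq_zero_of_add_eq_neg (hsum : a * (x + y) + b = 0)
    (hx : a * (x * x) + b * x + c = 0) : a * (y * y) + b * y + c = 0 := by
  linear_combination hx + (y - x) * hsum

theorem mul_eq_of_quadratic_eq_zero_of_ne [NoZeroDivisors R]
    (hx : a * (x * x) + b * x + c = 0) (hy : a * (y * y) + b * y + c = 0) (hxy : x ≠ y) :
    a * (x * y) = c := by
  have hsum : a * (x + y) + b = 0 := by
    have hfac : (x - y) * (a * (x + y) + b) = 0 := by linear_combination hx - hy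
    exact (mul_eq_zero.mp hfac).resolve_left (sub_ne_zero.mpr hxy)
  linear_combination x * hsum - hx

end Quadratic

theorem Complex.im_pos_of_mul_eq_one_of_im_neg {w u : ℂ} (hwu : w * u = 1) (hw : w.im < 0) :
    0 < u.im := by
  have hw0 : w ≠ 0 := fun h => hw.ne (by rw [h, zero_im])
  rw [eq_inv_of_mul_eq_one_right hwu, inv_im]
  exact div_pos (neg_pos.mpr hw) (normSq_pos.mpr hw0)

section Dyson

variable {σ : ℝ} {z m : ℂ}

theorem dyson_iff_quadratic :
    m * (z + (σ : ℂ) * m) = -1 ↔ (σ : ℂ) * (m * m) + z * m + 1 = 0 := by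
  constructor <;> intro h <;> linear_combination h

theorem exists_dyson_im_neg (hσ : 0 < σ) (hz : 0 < z.im) :
    ∃ m : ℂ, m.im < 0 ∧ m * (z + (σ : ℂ) * m) = -1 := by
  have hσ' : (σ : ℂ) ≠ 0 := ofReal_ne_zero.mpr hσ.ne'
  obtain ⟨m₁, hm₁⟩ := exists_quadratic_eq_zero hσ' (IsAlgClosed.exists_eq_mul_self _)
  set m₂ : ℂ := -z / σ - m₁
  have hsum : (σ : ℂ) * (m₁ + m₂) + z = 0 := by
    simp only [m₂]
    field_simp
    ring
  have hm₂ := quadratic_eq_zero_of_add_eq_neg hsum hm₁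
  have him : m₁.im + m₂.im = -z.im / σ := by
    simp only [m₂, sub_im, div_ofReal_im, neg_im]
    ring
  have him_neg : m₁.im + m₂.im < 0 := by
    rw [him]
    exact div_neg_of_neg_of_pos (neg_neg_of_pos hz) hσ
  by_cases h₁ : m₁.im < 0
  · exact ⟨m₁, h₁, dyson_iff_quadratic.mpr hm₁⟩
  · exact ⟨m₂, by linarith, dyson_iff_quadratic.mpr hm₂⟩

theorem dyson_im_neg_unique (hσ : 0 < σ) {m m' : ℂ}
    (hm : m.im < 0 ∧ m * (z + (σ : ℂ) * m) = -1)
    (hm' : m'.im < 0 ∧ m' * (z + (σ : ℂ) * m') = -1) : m = m' := by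
  by_contra hne
  have hprod : (σ : ℂ) * m * m' = 1 := by
    rw [mul_assoc]
    exact mul_eq_of_quadratic_eq_zero_of_ne (dyson_iff_quadratic.mp hm.2)
      (dyson_iff_quadratic.mp hm'.2) hne
  have hσm : ((σ : ℂ) * m).im < 0 := by
    rw [im_ofReal_mul]
    exact mul_neg_of_pos_of_neg hσ hm.1
  exact hm'.1.not_gt (im_pos_of_mul_eq_one_of_im_neg hprod hσm)

end Dyson

/-- For real `σ > 0` and `z ∈ ℂ` with `Im z > 0`, there exists exactly
one `m ∈ ℂ` with `Im m < 0` satisfying the scalar Dyson equation `m·(z + σ·m) = −1`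
(i.e. `1/m = −z − σ·m`). -/
theorem stmt11 (σ : ℝ) (hσ : 0 < σ) (z : ℂ) (hz : 0 < z.im) :
    ∃! m : ℂ, m.im < 0 ∧ m * (z + (σ : ℂ) * m) = -1 := by
  obtain ⟨m, hm⟩ := exists_dyson_im_neg hσ hz
  exact ⟨m, hm, fun m' hm' => dyson_im_neg_unique hσ hm' hm⟩
end

section
/- Let S ∈ ℝ^{N×N} be symmetric, v, w ∈ ℝ^N, θ ∈ ℝ, and let ξ ∈ ℝ be a real number that is not an eigenvalue of S. Set R = (ξ·I − S)⁻¹, φ(ξ) = vᵀ·R·v, ψ(ξ) = vᵀ·R·w, χ(ξ) = wᵀ·R·w. Then ξ is an eigenvalue of the perturbed matrix S^θ = S + θ·(v·wᵀ + w·vᵀ) if and only if (1 − θ·ψ(ξ))² = θ²·φ(ξ)·χ(ξ). -/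
open Matrix

/-- For symmetric `S`, `v, w ∈ ℝ^N`, `θ ∈ ℝ`, and `ξ ∈ ℝ` not an
eigenvalue of `S` (i.e. `ξ·I − S` invertible), with `R = (ξ·I − S)⁻¹`, `φ = vᵀRv`,
`ψ = vᵀRw`, `χ = wᵀRw`, the real number `ξ` is an eigenvalue of
`S^θ = S + θ·(v·wᵀ + w·vᵀ)` (i.e. `det(ξ·I − S^θ) = 0`) iff `(1 − θψ)² = θ²φχ`. -/
theorem stmt15 (N : ℕ) (hN : 0 < N)
    (S : Matrix (Fin N) (Fin N) ℝ) (hS : Sᵀ = S)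
    (v w : Fin N → ℝ) (θ ξ : ℝ)
    (hξ : IsUnit (ξ • (1 : Matrix (Fin N) (Fin N) ℝ) - S))
    (R : Matrix (Fin N) (Fin N) ℝ)
    (hR : R = (ξ • (1 : Matrix (Fin N) (Fin N) ℝ) - S)⁻¹)
    (φ ψ χ : ℝ)
    (hφ : φ = v ⬝ᵥ (R *ᵥ v)) (hψ : ψ = v ⬝ᵥ (R *ᵥ w)) (hχ : χ = w ⬝ᵥ (R *ᵥ w))
    (Sθ : Matrix (Fin N) (Fin N) ℝ)
    (hSθ : Sθ = S + θ • (vecMulVec v w + vecMulVec w v)) :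
    (ξ • (1 : Matrix (Fin N) (Fin N) ℝ) - Sθ).det = 0 ↔
      (1 - θ * ψ) ^ 2 = θ ^ 2 * φ * χ := by
  set A : Matrix (Fin N) (Fin N) ℝ := ξ • (1 : Matrix (Fin N) (Fin N) ℝ) - S with hA
  have hdetA : IsUnit A.det := (Matrix.isUnit_iff_isUnit_det A).mp hξ
  have hdetA' : A.det ≠ 0 := hdetA.ne_zero
  have hAR : A * R = 1 := by rw [hR]; exact Matrix.mul_nonsing_inv A hdetA
  have hAsymm : Aᵀ = A := by
    rw [hA, Matrix.transpose_sub, Matrix.transpose_smul, Matrix.transpose_one, hS]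
  have hRsymm : Rᵀ = R := by
    rw [hR, Matrix.transpose_nonsing_inv, hAsymm]
  have hswap : w ⬝ᵥ (R *ᵥ v) = v ⬝ᵥ (R *ᵥ w) := by
    rw [Matrix.dotProduct_mulVec, ← Matrix.mulVec_transpose, hRsymm,
      dotProduct_comm]
  set C0 : Matrix (Fin N) (Fin 2) ℝ := Matrix.of fun i j => -θ * ![v, w] j i with hC0
  set D : Matrix (Fin 2) (Fin N) ℝ := Matrix.of fun j i => ![w, v] j i with hD
  have hC0D : C0 * D = (-θ) • (vecMulVec v w + vecMulVec w v) := by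
    ext i k
    simp [hC0, hD, Matrix.mul_apply, Fin.sum_univ_two, vecMulVec_apply]
    ring
  have hfac : ξ • (1 : Matrix (Fin N) (Fin N) ℝ) - Sθ = A * (1 + (R * C0) * D) := by
    rw [Matrix.mul_add, Matrix.mul_one, ← Matrix.mul_assoc, ← Matrix.mul_assoc, hAR,
      Matrix.one_mul, hC0D, hSθ, hA]
    rw [neg_smul, ← sub_eq_add_neg]
    abel
  have key : ∀ x y : Fin N → ℝ,
      ∑ i, x i * (∑ l, R i l * (-θ * y l)) = -θ * (x ⬝ᵥ (R *ᵥ y)) := by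
    intro x y
    simp only [dotProduct, Matrix.mulVec, Finset.mul_sum]
    exact Finset.sum_congr rfl fun i _ => Finset.sum_congr rfl fun l _ => by ring
  have e : ∀ j k, (D * (R * C0)) j k = -θ * (![w, v] j ⬝ᵥ (R *ᵥ ![v, w] k)) := by
    intro j k
    simp only [hD, hC0, Matrix.mul_apply, Matrix.of_apply]
    exact key _ _
  have h2 : (1 + D * (R * C0) : Matrix (Fin 2) (Fin 2) ℝ) =
      !![1 - θ * ψ, -θ * χ; -θ * φ, 1 - θ * ψ] := by
    ext j k
    fin_cases j <;> fin_cases k <;>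
      simp [Matrix.add_apply, Matrix.one_apply, e, hswap, ← hφ, ← hψ, ← hχ] <;>
      ring
  rw [hfac, Matrix.det_mul, mul_eq_zero, or_iff_right hdetA',
    Matrix.det_one_add_mul_comm, h2, Matrix.det_fin_two_of]
  constructor <;> intro h <;> nlinarith [h]
end
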